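/- arXiv:1204.5804 — 10 statements merged into one kernel-verified Lean document; each statement's English description precedes it below -/
import Mathlib

section
/- Suppose f is a complex function analytic at a point a with f'(a) ≠ 0, and set b = f(a). Then f has a local analytic inverse f⁻¹ defined on a neighborhood of b, and on that neighborhood f⁻¹(z) = a + Σ_{n=1}^∞ c_n (z − b)^n, where c_n = (1/n!) · d^{n−1}/dw^{n−1} [ (w − a)/(f(w) − b) ]^n evaluated at w = a. -/
open Filter Topology Metric Complex Real Finset

/-!
Write `f w - b = (w - a) * ψ w` with `ψ = dslope f a`, and let `p` be the power series of the
local inverse `g` at `b`. On a small circle around `a`, integration by parts gives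
`∮ (f - b)⁻ⁿ = n ∮ w f' (f - b)⁻ⁿ⁻¹`. Expand `w = g (f w)` as its Taylor polynomial of degree
`n - 1` in `f w - b` plus a remainder `(f w - b)ⁿ Q (f w)`: the polynomial terms turn into exact
derivatives `f' (f - b)ᵏ⁻ⁿ⁻¹` and integrate to zero, while the remainder has a simple pole at `a`
and contributes `2πi n Q b = 2πi n pₙ`. On the other hand `(f - b)⁻ⁿ = (w - a)⁻ⁿ ψ⁻ⁿ`, so
Cauchy's formula for derivatives evaluates the same integral as `2πi (ψ⁻ⁿ)⁽ⁿ⁻¹⁾(a) / (n - 1)!`.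
-/

section Dslope
variable {𝕜 E : Type*} [NontriviallyNormedField 𝕜] [NormedAddCommGroup E] [NormedSpace 𝕜 E]

theorem sum_add_pow_smul_iterate_dslope (f : 𝕜 → E) (a z : 𝕜) (n : ℕ) :
    ∑ k ∈ range n, (z - a) ^ k • (Function.swap dslope a)^[k] f a +
      (z - a) ^ n • (Function.swap dslope a)^[n] f z = f z := by
  induction n with
  | zero => simp
  | succ n ih =>
    rw [← ih, sum_range_succ, add_assoc, Function.iterate_succ_apply', pow_succ, mul_smul,
      Function.swap, sub_smul_dslope, smul_sub, add_sub_cancel]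

theorem HasFPowerSeriesAt.iterate_dslope_apply_self {f : 𝕜 → E}
    {p : FormalMultilinearSeries 𝕜 𝕜 E} {a : 𝕜} (hp : HasFPowerSeriesAt f p a) (n : ℕ) :
    (Function.swap dslope a)^[n] f a = p.coeff n := by
  rw [← (hp.has_fpower_series_iterate_dslope_fslope n).coeff_zero 1,
    ← FormalMultilinearSeries.coeff, FormalMultilinearSeries.coeff_iterate_fslope, zero_add]

theorem update_div_sub_eq_inv_dslope [DecidableEq 𝕜] (f : 𝕜 → 𝕜) (a : 𝕜) :
    Function.update (fun w => (w - a) / (f w - f a)) a (1 / deriv f a) =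
      fun w => (dslope f a w)⁻¹ := by
  funext w
  rcases eq_or_ne w a with rfl | hw
  · simp
  · simp [hw, dslope_of_ne, slope_def_field]

end Dslope

section CircleIntegral
variable {c : ℂ} {R : ℝ} {φ : ℂ → ℂ}

theorem circleIntegral_deriv_mul_zpow_eq_zero (hR : 0 ≤ R)
    (hφ : ∀ z ∈ sphere c R, DifferentiableAt ℂ φ z) (hφ0 : ∀ z ∈ sphere c R, φ z ≠ 0)
    {m : ℤ} (hm : m ≠ -1) :
    ∮ z in C(c, R), deriv φ z * φ z ^ m = 0 := by
  have hm1 : (m + 1 : ℂ) ≠ 0 := by exact_mod_cast (by omega : m + 1 ≠ 0)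
  refine circleIntegral.integral_eq_zero_of_hasDerivWithinAt (f := fun z => φ z ^ (m + 1) / (m + 1))
    hR fun z hz => HasDerivAt.hasDerivWithinAt ?_
  refine (((hasDerivAt_zpow (m + 1) (φ z) (.inl (hφ0 z hz))).comp z
    (hφ z hz).hasDerivAt).div_const (m + 1 : ℂ)).congr_deriv ?_
  push_cast
  rw [add_sub_cancel_right]
  field_simp

theorem circleIntegral_zpow_eq_neg_mul_integral_mul_deriv (hR : 0 ≤ R)
    (hφ : AnalyticOnNhd ℂ φ (sphere c R)) (hφ0 : ∀ z ∈ sphere c R, φ z ≠ 0) (m : ℤ) :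
    ∮ z in C(c, R), φ z ^ m = -m * ∮ z in C(c, R), z * deriv φ z * φ z ^ (m - 1) := by
  have hzpow (k : ℤ) : ContinuousOn (fun z => φ z ^ k) (sphere c R) :=
    hφ.continuousOn.zpow₀ k fun z hz => .inl (hφ0 z hz)
  have hprod : ∀ z ∈ sphere c R, HasDerivAt (fun z => z * φ z ^ m)
      (φ z ^ m + m * (z * deriv φ z * φ z ^ (m - 1))) z := by
    intro z hz
    refine ((hasDerivAt_id z).mul ((hasDerivAt_zpow m (φ z) (.inl (hφ0 z hz))).comp z
      (hφ z hz).differentiableAt.hasDerivAt)).congr_deriv ?_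
    simp only [Function.comp_apply, id_eq, one_mul]
    ring
  have h := circleIntegral.integral_eq_zero_of_hasDerivWithinAt hR
    fun z hz => (hprod z hz).hasDerivWithinAt
  have hint : CircleIntegrable (fun z => (m : ℂ) * (z * deriv φ z * φ z ^ (m - 1))) c R :=
    (continuousOn_const.mul ((continuousOn_id.mul hφ.deriv.continuousOn).mul
      (hzpow _))).circleIntegrable hR
  rw [circleIntegral.integral_add ((hzpow m).circleIntegrable hR) hint,
    circleIntegral.integral_const_mul] at h
  linear_combination h

theorem circleIntegrable_const_mul_deriv_mul_zpow (hR : 0 ≤ R)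
    (hφ : AnalyticOnNhd ℂ φ (sphere c R)) (hφ0 : ∀ z ∈ sphere c R, φ z ≠ 0) (q : ℂ) (m : ℤ) :
    CircleIntegrable (fun z => q * (deriv φ z * φ z ^ m)) c R :=
  (continuousOn_const.mul (hφ.deriv.continuousOn.mul
    (hφ.continuousOn.zpow₀ _ fun z hz => .inl (hφ0 z hz)))).circleIntegrable hR

theorem circleIntegral_sum_mul_deriv_mul_zpow_eq_zero (hR : 0 ≤ R)
    (hφ : AnalyticOnNhd ℂ φ (sphere c R)) (hφ0 : ∀ z ∈ sphere c R, φ z ≠ 0) {q : ℕ → ℂ}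
    {n : ℕ} :
    ∮ z in C(c, R), ∑ k ∈ range n, q k * (deriv φ z * φ z ^ ((k : ℤ) - n - 1)) = 0 := by
  rw [circleIntegral.integral_fun_sum fun k _ =>
    circleIntegrable_const_mul_deriv_mul_zpow hR hφ hφ0 (q k) _]
  refine sum_eq_zero fun k hk => ?_
  rw [circleIntegral.integral_const_mul, circleIntegral_deriv_mul_zpow_eq_zero hR
    (fun z hz => (hφ z hz).differentiableAt) hφ0 (by simp at hk; omega), mul_zero]

end CircleIntegral

theorem mul_mul_zpow_neg_sub_one_of_eq_sum {K : Type*} [Field K] {z u d F : K} {q : ℕ → K}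
    {n : ℕ} (hu : u ≠ 0) (hz : z = ∑ k ∈ range n, q k * u ^ k + u ^ n * F) :
    z * d * u ^ (-(n : ℤ) - 1) = ∑ k ∈ range n, q k * (d * u ^ ((k : ℤ) - n - 1)) + d * F / u := by
  have hpow (k : ℕ) : u ^ ((k : ℤ) - n - 1) = u ^ k * u ^ (-(n : ℤ) - 1) := by
    rw [← zpow_natCast, ← zpow_add₀ hu]; ring_nf
  have hinv : u ^ n * u ^ (-(n : ℤ) - 1) = u⁻¹ := by
    rw [← zpow_natCast, ← zpow_add₀ hu, show (n : ℤ) + (-n - 1) = -1 by ring, zpow_neg_one]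
  rw [hz, add_mul, add_mul, sum_mul, sum_mul, div_eq_mul_inv, ← hinv]
  simp only [hpow]
  congr 1
  · exact sum_congr rfl fun k _ => by ring
  · ring

theorem circleIntegral_sub_mul_zpow_neg_eq {a : ℂ} {r : ℝ} {ψ F : ℂ → ℂ} {q : ℕ → ℂ} {n : ℕ}
    (hr : 0 < r) (hψ : AnalyticOnNhd ℂ ψ (closedBall a r))
    (hψ0 : ∀ w ∈ closedBall a r, ψ w ≠ 0) (hF : DifferentiableOn ℂ F (closedBall a r))
    (hexp : ∀ w ∈ sphere a r,
      w = ∑ k ∈ range n, q k * ((w - a) * ψ w) ^ k + ((w - a) * ψ w) ^ n * F w) :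
    ∮ z in C(a, r), ((z - a) * ψ z) ^ (-(n : ℤ)) = 2 * π * I * n * F a := by
  set φ : ℂ → ℂ := fun z => (z - a) * ψ z
  have hφ : AnalyticOnNhd ℂ φ (closedBall a r) :=
    (analyticOnNhd_id.sub analyticOnNhd_const).mul hψ
  have hφs : AnalyticOnNhd ℂ φ (sphere a r) := hφ.mono sphere_subset_closedBall
  have hφ0 : ∀ w ∈ sphere a r, φ w ≠ 0 := fun w hw =>
    mul_ne_zero (sub_ne_zero.2 (ne_of_mem_sphere hw hr.ne')) (hψ0 w (sphere_subset_closedBall hw))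
  have ha := mem_closedBall_self (x := a) hr.le
  have hderiv_a : deriv φ a = ψ a := by
    simpa using (((hasDerivAt_id a).sub_const a).fun_mul
      (hψ a ha).differentiableAt.hasDerivAt).deriv
  set G : ℂ → ℂ := fun z => deriv φ z * F z / ψ z
  have hG : DifferentiableOn ℂ G (closedBall a r) :=
    (hφ.deriv.differentiableOn.mul hF).div hψ.differentiableOn hψ0
  have hsplit : Set.EqOn (fun z => z * deriv φ z * φ z ^ (-(n : ℤ) - 1))
      (fun z => ∑ k ∈ range n, q k * (deriv φ z * φ z ^ ((k : ℤ) - n - 1)) + (z - a)⁻¹ * G z)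
      (sphere a r) := by
    intro z hz
    beta_reduce
    rw [mul_mul_zpow_neg_sub_one_of_eq_sum (u := φ z) (hφ0 z hz) (hexp z hz)]
    simp only [G, φ, div_eq_mul_inv, mul_inv]
    ring
  have hres_int : CircleIntegrable (fun z => (z - a)⁻¹ * G z) a r :=
    (((continuousOn_id.sub continuousOn_const).inv₀ fun w hw =>
      sub_ne_zero.2 (ne_of_mem_sphere hw hr.ne')).mul
      (hG.continuousOn.mono sphere_subset_closedBall)).circleIntegrable hr.le
  have hres : ∮ z in C(a, r), (z - a)⁻¹ * G z = 2 * π * I * G a :=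
    hG.circleIntegral_sub_inv_smul (mem_ball_self hr)
  change ∮ z in C(a, r), φ z ^ (-(n : ℤ)) = _
  rw [circleIntegral_zpow_eq_neg_mul_integral_mul_deriv hr.le hφs hφ0,
    circleIntegral.integral_congr hr.le hsplit,
    circleIntegral.integral_add (CircleIntegrable.fun_sum _ fun k _ =>
      circleIntegrable_const_mul_deriv_mul_zpow hr.le hφs hφ0 (q k) _) hres_int,
    circleIntegral_sum_mul_deriv_mul_zpow_eq_zero hr.le hφs hφ0, hres]
  simp only [G, hderiv_a]
  field_simp [hψ0 a ha]
  push_cast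
  ring

theorem HasFPowerSeriesAt.exists_circleIntegral_sub_mul_dslope_zpow_eq {f g : ℂ → ℂ}
    {p : FormalMultilinearSeries ℂ ℂ ℂ} {a : ℂ} (hg : HasFPowerSeriesAt g p (f a))
    (hf : AnalyticAt ℂ f a) (hf' : deriv f a ≠ 0) (hgf : ∀ᶠ w in 𝓝 a, g (f w) = w) (n : ℕ) :
    ∃ r > 0, (∀ w ∈ closedBall a r, AnalyticAt ℂ (dslope f a) w ∧ dslope f a w ≠ 0) ∧
      ∮ z in C(a, r), ((z - a) * dslope f a z) ^ (-(n : ℤ)) = 2 * π * I * n * p.coeff n := by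
  set Q := (Function.swap dslope (f a))^[n] g
  obtain ⟨pf, hpf⟩ := hf
  have hψ : AnalyticAt ℂ (dslope f a) a := hpf.has_fpower_series_dslope_fslope.analyticAt
  have hQ : AnalyticAt ℂ Q (f a) := (hg.has_fpower_series_iterate_dslope_fslope n).analyticAt
  have hnear : ∀ᶠ w in 𝓝 a, AnalyticAt ℂ (dslope f a) w ∧ dslope f a w ≠ 0 ∧
      AnalyticAt ℂ f w ∧ AnalyticAt ℂ Q (f w) ∧ g (f w) = w := by
    filter_upwards [hψ.eventually_analyticAt,
      hψ.continuousAt.eventually_ne (by rwa [dslope_same]), hpf.analyticAt.eventually_analyticAt,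
      hpf.analyticAt.continuousAt.eventually hQ.eventually_analyticAt, hgf] with w h₁ h₂ h₃ h₄ h₅
    exact ⟨h₁, h₂, h₃, h₄, h₅⟩
  obtain ⟨r, hr, hball⟩ := nhds_basis_closedBall.eventually_iff.1 hnear
  have hexp : ∀ w ∈ sphere a r, w = ∑ k ∈ range n,
      (Function.swap dslope (f a))^[k] g (f a) * ((w - a) * dslope f a w) ^ k +
        ((w - a) * dslope f a w) ^ n * Q (f w) := by
    intro w hw
    have h := sum_add_pow_smul_iterate_dslope g (f a) (f w) n
    rw [(hball (sphere_subset_closedBall hw)).2.2.2.2, ← sub_smul_dslope, smul_eq_mul] at h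
    simpa only [smul_eq_mul, mul_comm] using h.symm
  refine ⟨r, hr, fun w hw => ⟨(hball hw).1, (hball hw).2.1⟩, ?_⟩
  rw [← hg.iterate_dslope_apply_self]
  exact circleIntegral_sub_mul_zpow_neg_eq hr (fun w hw => (hball hw).1)
    (fun w hw => (hball hw).2.1)
    (fun w hw => ((hball hw).2.2.2.1.comp (hball hw).2.2.1).differentiableAt.differentiableWithinAt)
    hexp

theorem HasFPowerSeriesAt.coeff_succ_eq_of_leftInverse {f g : ℂ → ℂ}
    {p : FormalMultilinearSeries ℂ ℂ ℂ} {a : ℂ} (hg : HasFPowerSeriesAt g p (f a))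
    (hf : AnalyticAt ℂ f a) (hf' : deriv f a ≠ 0) (hgf : ∀ᶠ w in 𝓝 a, g (f w) = w) (n : ℕ) :
    p.coeff (n + 1) =
      ((n + 1).factorial : ℂ)⁻¹ * iteratedDeriv n (fun w => (dslope f a w)⁻¹ ^ (n + 1)) a := by
  obtain ⟨r, hr, hψ, hres⟩ := hg.exists_circleIntegral_sub_mul_dslope_zpow_eq hf hf' hgf (n + 1)
  have hcauchy := DifferentiableOn.circleIntegral_one_div_sub_center_pow_smul hr n
    (f := fun w => (dslope f a w)⁻¹ ^ (n + 1)) (c := a)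
    (fun w hw => (((hψ w hw).1.inv (hψ w hw).2).pow _).differentiableAt.differentiableWithinAt)
  have hintegrand : (fun z => ((z - a) * dslope f a z) ^ (-((n + 1 : ℕ) : ℤ))) =
      fun z => (1 / (z - a) ^ (n + 1)) • (dslope f a z)⁻¹ ^ (n + 1) := by
    funext z
    rw [zpow_neg, zpow_natCast, smul_eq_mul, one_div, ← inv_pow, ← inv_pow, ← mul_pow, mul_inv]
  have hfac : (n.factorial : ℂ) ≠ 0 := by exact_mod_cast n.factorial_ne_zero
  rw [hintegrand, hcauchy, smul_eq_mul, div_mul_eq_mul_div, div_eq_iff hfac] at hres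
  rw [Nat.factorial_succ, Nat.cast_mul, eq_inv_mul_iff_mul_eq₀
    (mul_ne_zero (Nat.cast_ne_zero.2 n.succ_ne_zero) hfac)]
  push_cast at hres ⊢
  apply mul_left_cancel₀ two_pi_I_ne_zero
  linear_combination -hres

/-- **Lagrange inversion theorem.** If `f` is analytic at `a` with `f'(a) ≠ 0` and
`b = f a`, then `f` has a local analytic inverse `g` near `b`, and on a neighborhood
of `b` one has `g z = a + ∑_{n≥1} cₙ (z - b)ⁿ` where
`cₙ = (1/n!) dⁿ⁻¹/dwⁿ⁻¹ [(w - a)/(f w - b)]ⁿ` at `w = a` (the quotient being understood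
as its analytic extension, with value `1 / f'(a)` at `w = a`). -/
theorem lagrange_inversion (f : ℂ → ℂ) (a b : ℂ)
    (hf : AnalyticAt ℂ f a) (hf' : deriv f a ≠ 0) (hb : b = f a)
    (c : ℕ → ℂ)
    (hc : ∀ n : ℕ, 1 ≤ n → c n = (1 / (n.factorial : ℂ)) *
      iteratedDeriv (n - 1)
        (fun w =>
          (Function.update (fun w => (w - a) / (f w - b)) a (1 / deriv f a) w) ^ n) a) :
    ∃ g : ℂ → ℂ, AnalyticAt ℂ g b ∧ (∀ᶠ w in 𝓝 a, g (f w) = w) ∧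
      ∀ᶠ z in 𝓝 b, HasSum (fun n : ℕ => c (n + 1) * (z - b) ^ (n + 1)) (g z - a) := by
  subst hb
  set g := hf.hasStrictDerivAt.localInverse _ _ _ hf'
  have hgf : ∀ᶠ w in 𝓝 a, g (f w) = w := hf.hasStrictDerivAt.eventually_left_inverse hf'
  obtain ⟨p, r, hp⟩ := hf.analyticAt_localInverse hf'
  have hcoeff (n : ℕ) : c (n + 1) = p.coeff (n + 1) := by
    rw [hc (n + 1) n.succ_pos, Nat.add_sub_cancel, update_div_sub_eq_inv_dslope,
      hp.hasFPowerSeriesAt.coeff_succ_eq_of_leftInverse hf hf' hgf, one_div]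
  refine ⟨g, hp.analyticAt, hgf, ?_⟩
  have hcoeff_zero : p.coeff 0 = a := (hp.coeff_zero _).trans hgf.self_of_nhds
  filter_upwards [eball_mem_nhds _ hp.r_pos] with z hz
  have hsum := (hasSum_nat_add_iff' 1).2 (hp.hasSum_sub hz)
  simpa [hcoeff, FormalMultilinearSeries.apply_eq_pow_smul_coeff, mul_comm, hcoeff_zero]
    using hsum
end

section
/- Let h be analytic at x₀ with h'(x₀) ≠ 0, let f(x) = 1/h'(x), and assume 0 < |f(x₀)| < ∞. Set z₀ = h(x₀). Then h has a local analytic inverse h⁻¹ near z₀, and on a neighborhood of z₀, h⁻¹(z) = x₀ + f(x₀) · Σ_{n=1}^∞ 𝔇^{n−1}[f](x₀) · (z − z₀)^n / n!. -/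
open Filter Topology

/-- The `n`-th nested derivative `𝔇ⁿ[f]`, defined by `𝔇⁰[f] = 1` and
`𝔇ⁿ⁺¹[f] = (f · 𝔇ⁿ[f])'`. -/
noncomputable def nestedDeriv (f : ℝ → ℝ) : ℕ → ℝ → ℝ
  | 0 => fun _ => 1
  | n + 1 => deriv fun x => f x * nestedDeriv f n x

/-!
The local inverse `H` of `h` solves the autonomous equation `H' = f ∘ H`. Differentiating it
repeatedly with the chain rule gives `H⁽ⁿ⁺¹⁾ = (f · 𝔇ⁿ[f]) ∘ H`, so the claimed series is just the
Taylor series of the analytic function `H` at `z₀`, with `H z₀ = x₀`.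
-/

section

variable {𝕜 : Type*} [NontriviallyNormedField 𝕜] [CompleteSpace 𝕜] [CharZero 𝕜]
  {g h : 𝕜 → 𝕜} {a x₀ : 𝕜}

theorem AnalyticAt.eventually_hasSum_iteratedDeriv (hg : AnalyticAt 𝕜 g a) :
    ∀ᶠ z in 𝓝 a, HasSum (fun n => iteratedDeriv n g a * (z - a) ^ n / n.factorial) (g z) := by
  filter_upwards [hg.hasFPowerSeriesAt.eventually_hasSum_sub] with z hz
  simpa only [FormalMultilinearSeries.ofScalars_apply_eq, smul_eq_mul, div_mul_eq_mul_div]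
    using hz

theorem AnalyticAt.eventually_hasSum_iteratedDeriv_succ (hg : AnalyticAt 𝕜 g a) :
    ∀ᶠ z in 𝓝 a, HasSum
      (fun n => iteratedDeriv (n + 1) g a * (z - a) ^ (n + 1) / (n + 1).factorial)
      (g z - g a) := by
  filter_upwards [hg.eventually_hasSum_iteratedDeriv] with z hz
  simpa using (hasSum_nat_add_iff' 1).2 hz

theorem AnalyticAt.eventually_hasDerivAt_localInverse (hh : AnalyticAt 𝕜 h x₀)
    (hh' : deriv h x₀ ≠ 0) :
    ∀ᶠ z in 𝓝 (h x₀), HasDerivAt (hh.hasStrictDerivAt.localInverse _ _ _ hh')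
      (deriv h (hh.hasStrictDerivAt.localInverse _ _ _ hh' z))⁻¹ z := by
  set H := hh.hasStrictDerivAt.localInverse _ _ _ hh'
  have hHa : AnalyticAt 𝕜 H (h x₀) := hh.analyticAt_localInverse hh'
  have hH : Tendsto H (𝓝 (h x₀)) (𝓝 x₀) := by
    simpa only [H, HasStrictFDerivAt.localInverse_apply_image]
      using hHa.continuousAt.tendsto
  have hreg : ∀ᶠ x in 𝓝 x₀, AnalyticAt 𝕜 h x ∧ deriv h x ≠ 0 :=
    hh.eventually_analyticAt.and (hh.deriv.continuousAt.eventually_ne hh')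
  filter_upwards [hH.eventually hreg, hHa.eventually_analyticAt,
    (hh.hasStrictDerivAt.eventually_right_inverse hh').eventually_nhds]
    with z ⟨hdiff, hne⟩ hHz hright
  exact hdiff.differentiableAt.hasDerivAt.of_local_left_inverse hHz.continuousAt hne hright

end

theorem analyticOnNhd_nestedDeriv {f : ℝ → ℝ} {s : Set ℝ} (hf : AnalyticOnNhd ℝ f s) (n : ℕ) :
    AnalyticOnNhd ℝ (nestedDeriv f n) s := by
  induction n with
  | zero => exact fun _ _ => analyticAt_const
  | succ n ih => exact (hf.mul ih).deriv

theorem iteratedDeriv_succ_eventuallyEq_nestedDeriv {f y : ℝ → ℝ} {z₀ : ℝ}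
    (hf : AnalyticAt ℝ f (y z₀)) (hy : ∀ᶠ z in 𝓝 z₀, HasDerivAt y (f (y z)) z) (n : ℕ) :
    iteratedDeriv (n + 1) y =ᶠ[𝓝 z₀] fun z => f (y z) * nestedDeriv f n (y z) := by
  induction n with
  | zero =>
    filter_upwards [hy] with z hz
    simp [nestedDeriv, hz.deriv]
  | succ n ih =>
    have hya : ∀ᶠ z in 𝓝 z₀, AnalyticAt ℝ f (y z) :=
      hy.self_of_nhds.continuousAt.tendsto.eventually hf.eventually_analyticAt
    filter_upwards [ih.deriv, hy, hya] with z hz hyz hfz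
    have hDn : AnalyticAt ℝ (nestedDeriv f n) (y z) :=
      analyticOnNhd_nestedDeriv (s := {x | AnalyticAt ℝ f x}) (fun _ hx => hx) n _ hfz
    have hg : HasDerivAt (fun x => f x * nestedDeriv f n x) (nestedDeriv f (n + 1) (y z)) (y z) :=
      (hfz.mul hDn).differentiableAt.hasDerivAt
    rw [iteratedDeriv_succ, hz]
    exact (hg.comp z hyz).deriv.trans (mul_comm _ _)

theorem inverse_series_nested_deriv_general (h : ℝ → ℝ) (x₀ : ℝ)
    (hh : AnalyticAt ℝ h x₀) (hh' : deriv h x₀ ≠ 0)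
    (f : ℝ → ℝ) (hf : ∀ x, f x = 1 / deriv h x)
    (z₀ : ℝ) (hz₀ : z₀ = h x₀) :
    ∃ H : ℝ → ℝ, AnalyticAt ℝ H z₀ ∧ (∀ᶠ x in 𝓝 x₀, H (h x) = x) ∧
      ∀ᶠ z in 𝓝 z₀, HasSum
        (fun n : ℕ => f x₀ * nestedDeriv f n x₀ * (z - z₀) ^ (n + 1) / ((n + 1).factorial : ℝ))
        (H z - x₀) := by
  subst hz₀
  set H := hh.hasStrictDerivAt.localInverse _ _ _ hh'
  have hHa : AnalyticAt ℝ H (h x₀) := hh.analyticAt_localInverse hh'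
  have hHx₀ : H (h x₀) = x₀ := HasStrictFDerivAt.localInverse_apply_image ..
  have hf_eq : f = fun x => (deriv h x)⁻¹ := funext fun x => by rw [hf, one_div]
  have hfa : AnalyticAt ℝ f (H (h x₀)) := by rw [hHx₀, hf_eq]; exact hh.deriv.inv hh'
  have hODE : ∀ᶠ z in 𝓝 (h x₀), HasDerivAt H (f (H z)) z := by
    simpa only [hf_eq] using hh.eventually_hasDerivAt_localInverse hh'
  have hcoeff (n : ℕ) : iteratedDeriv (n + 1) H (h x₀) = f x₀ * nestedDeriv f n x₀ := by
    rw [(iteratedDeriv_succ_eventuallyEq_nestedDeriv hfa hODE n).eq_of_nhds, hHx₀]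
  refine ⟨H, hHa, hh.hasStrictDerivAt.eventually_left_inverse hh', ?_⟩
  simpa only [hcoeff, hHx₀] using hHa.eventually_hasSum_iteratedDeriv_succ

/-- If `h` is analytic at `x₀` with `h'(x₀) ≠ 0`, `f = 1/h'` with `0 < |f x₀| < ∞`, and
`z₀ = h x₀`, then `h` has a local analytic inverse `H` near `z₀` and
`H z = x₀ + f x₀ · ∑_{n≥1} 𝔇ⁿ⁻¹[f](x₀) (z - z₀)ⁿ / n!` near `z₀`. -/
theorem inverse_series_nested_deriv (h : ℝ → ℝ) (x₀ : ℝ)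
    (hh : AnalyticAt ℝ h x₀) (hh' : deriv h x₀ ≠ 0)
    (f : ℝ → ℝ) (hf : ∀ x, f x = 1 / deriv h x)
    (hf0 : 0 < |f x₀|) (z₀ : ℝ) (hz₀ : z₀ = h x₀) :
    ∃ H : ℝ → ℝ, AnalyticAt ℝ H z₀ ∧ (∀ᶠ x in 𝓝 x₀, H (h x) = x) ∧
      ∀ᶠ z in 𝓝 z₀, HasSum
        (fun n : ℕ => f x₀ * nestedDeriv f n x₀ * (z - z₀) ^ (n + 1) / ((n + 1).factorial : ℝ))
        (H z - x₀) :=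
  inverse_series_nested_deriv_general h x₀ hh hh' f hf z₀ hz₀
end

section
/- Let h be analytic at x₀ with h'(x₀) ≠ 0, let f(x) = 1/h'(x), assume 0 < |f(x₀)| < ∞, set z₀ = h(x₀), and let H = h⁻¹ be the local inverse of h near z₀. Define g_n(x) = 𝔇^n[f](x) / f(x)^n. Then for every n ≥ 1, the n-th derivative of H at z₀ satisfies H^{(n)}(z₀) = f(x₀)^n · g_{n−1}(x₀). -/
/-! Differentiating `H (h x) = x` repeatedly: with `f = 1 / h'`, the chain rule turns each
identity `H⁽ᵏ⁾ ∘ h = ψ` into `H⁽ᵏ⁺¹⁾ ∘ h = f · ψ'`, and starting from `ψ = id` this produces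
exactly the recursion `𝔇ⁿ⁺¹[f] = (f · 𝔇ⁿ[f])'`. The local inverse `H` is analytic by the
analytic inverse function theorem, so all its derivatives exist. -/

open Filter Topology

theorem deriv_apply_eq_mul_deriv_of_comp_eventuallyEq {φ ψ h f : ℝ → ℝ} {x : ℝ}
    (hφ : DifferentiableAt ℝ φ (h x)) (hh : DifferentiableAt ℝ h x)
    (hf : f x * deriv h x = 1) (hφψ : φ ∘ h =ᶠ[𝓝 x] ψ) :
    deriv φ (h x) = f x * deriv ψ x := by
  rw [← hφψ.deriv_eq, deriv_comp x hφ hh]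
  linear_combination (-deriv φ (h x)) * hf

section LocalInverse

variable {h H f : ℝ → ℝ} {x₀ : ℝ}

theorem eventually_iteratedDeriv_succ_comp_eq_mul_deriv
    (hH : ∀ᶠ x in 𝓝 x₀, AnalyticAt ℝ H (h x)) (hh : ∀ᶠ x in 𝓝 x₀, DifferentiableAt ℝ h x)
    (hf : ∀ᶠ x in 𝓝 x₀, f x * deriv h x = 1) {k : ℕ} {ψ : ℝ → ℝ}
    (hψ : ∀ᶠ x in 𝓝 x₀, iteratedDeriv k H (h x) = ψ x) :
    ∀ᶠ x in 𝓝 x₀, iteratedDeriv (k + 1) H (h x) = f x * deriv ψ x := by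
  filter_upwards [hH, hh, hf, hψ.eventually_nhds] with x hHx hhx hfx hψx
  have hHk : DifferentiableAt ℝ (iteratedDeriv k H) (h x) := by
    rw [iteratedDeriv_eq_iterate]
    exact (hHx.iterated_deriv k).differentiableAt
  rw [iteratedDeriv_succ]
  exact deriv_apply_eq_mul_deriv_of_comp_eventuallyEq hHk hhx hfx hψx

theorem eventually_iteratedDeriv_succ_comp_eq_mul_nestedDeriv
    (hH : ∀ᶠ x in 𝓝 x₀, AnalyticAt ℝ H (h x)) (hh : ∀ᶠ x in 𝓝 x₀, DifferentiableAt ℝ h x)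
    (hf : ∀ᶠ x in 𝓝 x₀, f x * deriv h x = 1) (hinv : ∀ᶠ x in 𝓝 x₀, H (h x) = x) (n : ℕ) :
    ∀ᶠ x in 𝓝 x₀, iteratedDeriv (n + 1) H (h x) = f x * nestedDeriv f n x := by
  induction n with
  | zero =>
    simpa [nestedDeriv] using
      eventually_iteratedDeriv_succ_comp_eq_mul_deriv hH hh hf (k := 0) (ψ := id) hinv
  | succ n ih => exact eventually_iteratedDeriv_succ_comp_eq_mul_deriv hH hh hf ih

end LocalInverse

theorem iteratedDeriv_inverse_eq_nested_general (h : ℝ → ℝ) (x₀ : ℝ)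
    (hh : AnalyticAt ℝ h x₀) (hh' : deriv h x₀ ≠ 0)
    (f : ℝ → ℝ) (hf : ∀ x, f x = 1 / deriv h x)
    (z₀ : ℝ) (hz₀ : z₀ = h x₀)
    (H : ℝ → ℝ) (hH : ∀ᶠ x in 𝓝 x₀, H (h x) = x)
    (g : ℕ → ℝ → ℝ) (hg : ∀ n x, g n x = nestedDeriv f n x / f x ^ n) :
    ∀ n : ℕ, iteratedDeriv (n + 1) H z₀ = f x₀ ^ (n + 1) * g n x₀ := by
  intro n
  have hH_an : AnalyticAt ℝ H (h x₀) :=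
    (analyticAt_comp_iff_of_deriv_ne_zero hh hh').mp
      (analyticAt_id.congr (hH.mono fun _ hx => hx.symm))
  have hrecip : ∀ᶠ x in 𝓝 x₀, f x * deriv h x = 1 := by
    filter_upwards [hh.deriv.continuousAt.eventually_ne hh'] with x hx
    rw [hf x, one_div, inv_mul_cancel₀ hx]
  have key := eventually_iteratedDeriv_succ_comp_eq_mul_nestedDeriv
    (hh.continuousAt.eventually hH_an.eventually_analyticAt)
    (hh.eventually_analyticAt.mono fun _ hx => hx.differentiableAt) hrecip hH n
  have hfx₀ : f x₀ ≠ 0 := left_ne_zero_of_mul_eq_one hrecip.self_of_nhds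
  rw [hz₀, key.self_of_nhds, hg n x₀]
  field_simp
  ring

/-- If `h` is analytic at `x₀` with `h'(x₀) ≠ 0`, `f = 1/h'` with `0 < |f x₀| < ∞`,
`z₀ = h x₀`, `H` is the local inverse of `h` near `z₀`, and
`gₙ(x) = 𝔇ⁿ[f](x)/f(x)ⁿ`, then `H⁽ⁿ⁾(z₀) = f(x₀)ⁿ · gₙ₋₁(x₀)` for all `n ≥ 1`. -/
theorem iteratedDeriv_inverse_eq_nested (h : ℝ → ℝ) (x₀ : ℝ)
    (hh : AnalyticAt ℝ h x₀) (hh' : deriv h x₀ ≠ 0)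
    (f : ℝ → ℝ) (hf : ∀ x, f x = 1 / deriv h x)
    (hf0 : 0 < |f x₀|) (z₀ : ℝ) (hz₀ : z₀ = h x₀)
    (H : ℝ → ℝ) (hH : ∀ᶠ x in 𝓝 x₀, H (h x) = x)
    (g : ℕ → ℝ → ℝ) (hg : ∀ n x, g n x = nestedDeriv f n x / f x ^ n) :
    ∀ n : ℕ, iteratedDeriv (n + 1) H z₀ = f x₀ ^ (n + 1) * g n x₀ :=
  iteratedDeriv_inverse_eq_nested_general h x₀ hh hh' f hf z₀ hz₀ H hH g hg
end

section
/- Let ω be a smooth real function and define g_n by g_0(x) = 1 and g_{n+1}(x) = g_n'(x) + (n+1) ω(x) g_n(x) for n ≥ 0. Assume ω(x) ~ a x^p as x → ∞ with a ≠ 0 and p < −1, and assume that for each n ≥ 1 there exist c_n ≠ 0 and r_n ∈ ℝ such that g_n(x) ~ c_n x^{r_n} and g_n'(x) ~ c_n r_n x^{r_n − 1} as x → ∞. Then for each fixed n ≥ 1, g_n(x) ~ (−1)^n · (a/(p+1)) · (−p−1)_n · x^{p−n+1} as x → ∞. -/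
open Filter Topology Asymptotics

lemma rpow_isLittleO_rpow {s t : ℝ} (h : s < t) :
    (fun x : ℝ => x ^ s) =o[atTop] fun x : ℝ => x ^ t := by
  have hz : ∀ᶠ x : ℝ in atTop, x ^ t ≠ 0 := by
    filter_upwards [eventually_gt_atTop (0:ℝ)] with x hx
    exact (Real.rpow_pos_of_pos hx t).ne'
  rw [Asymptotics.isLittleO_iff_tendsto' (hz.mono fun x hx h0 => absurd h0 hx)]
  have : Tendsto (fun x : ℝ => x ^ (s - t)) atTop (𝓝 0) := by
    have := tendsto_rpow_neg_atTop (y := t - s) (by linarith)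
    simpa [neg_sub] using this
  refine this.congr' ?_
  filter_upwards [eventually_gt_atTop (0:ℝ)] with x hx
  rw [Real.rpow_sub hx, div_eq_div_iff] <;>
    simp [ (Real.rpow_pos_of_pos hx t).ne', (Real.rpow_pos_of_pos hx s).ne' ]

lemma power_asym_unique {c d r s : ℝ} (hc : c ≠ 0) (hd : d ≠ 0)
    (h : (fun x : ℝ => c * x ^ r) ~[atTop] fun x : ℝ => d * x ^ s) :
    r = s ∧ c = d := by
  have hz : ∀ᶠ x : ℝ in atTop, d * x ^ s ≠ 0 := by
    filter_upwards [eventually_gt_atTop (0:ℝ)] with x hx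
    exact mul_ne_zero hd (Real.rpow_pos_of_pos hx s).ne'
  have hT : Tendsto (fun x : ℝ => (c / d) * x ^ (r - s)) atTop (𝓝 1) := by
    refine ((isEquivalent_iff_tendsto_one hz).1 h).congr' ?_
    filter_upwards [eventually_gt_atTop (0:ℝ)] with x hx
    rw [Pi.div_apply, Real.rpow_sub hx]
    field_simp
  rcases lt_trichotomy r s with hrs | hrs | hrs
  · exfalso
    have h0 : Tendsto (fun x : ℝ => (c / d) * x ^ (r - s)) atTop (𝓝 ((c/d) * 0)) := by
      refine Tendsto.const_mul _ ?_
      have := tendsto_rpow_neg_atTop (y := s - r) (by linarith)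
      simpa [neg_sub] using this
    have := tendsto_nhds_unique hT h0
    simp at this
  · refine ⟨hrs, ?_⟩
    have h1 : Tendsto (fun _ : ℝ => c / d) atTop (𝓝 1) := by
      refine hT.congr' ?_
      filter_upwards with x
      simp [hrs]
    have : c / d = 1 := tendsto_nhds_unique tendsto_const_nhds h1
    field_simp at this
    exact this
  · exfalso
    have hcd : c / d ≠ 0 := div_ne_zero hc hd
    rcases hcd.lt_or_gt with hneg | hpos
    · have h0 : Tendsto (fun x : ℝ => (c / d) * x ^ (r - s)) atTop atBot :=
        (tendsto_rpow_atTop (by linarith : (0:ℝ) < r - s)).const_mul_atTop_of_neg hneg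
      exact not_tendsto_nhds_of_tendsto_atBot h0 1 hT
    · have h0 : Tendsto (fun x : ℝ => (c / d) * x ^ (r - s)) atTop atTop :=
        (tendsto_rpow_atTop (by linarith : (0:ℝ) < r - s)).const_mul_atTop hpos
      exact not_tendsto_nhds_of_tendsto_atTop h0 1 hT

/-- Case `p < -1`: if `ω(x) ~ a xᵖ` as `x → ∞` and the solutions of the recurrence
`gₙ₊₁ = gₙ' + (n+1) ω gₙ`, `g₀ = 1`, satisfy `gₙ(x) ~ cₙ x^{rₙ}` and
`gₙ'(x) ~ cₙ rₙ x^{rₙ - 1}` for some `cₙ ≠ 0`, `rₙ ∈ ℝ`, then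
`gₙ(x) ~ (-1)ⁿ (a/(p+1)) (-p-1)ₙ x^{p-n+1}` as `x → ∞`, for every fixed `n ≥ 1`. -/
theorem gn_asymptotics_p_lt_neg_one (ω : ℝ → ℝ) (hωsmooth : ContDiff ℝ (⊤ : ℕ∞) ω)
    (g : ℕ → ℝ → ℝ) (hg0 : ∀ x, g 0 x = 1)
    (hgrec : ∀ (n : ℕ) (x : ℝ), g (n + 1) x = deriv (g n) x + ((n : ℝ) + 1) * ω x * g n x)
    (a p : ℝ) (ha : a ≠ 0) (hp : p < -1)
    (hωasym : ω ~[atTop] fun x : ℝ => a * x ^ p)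
    (c r : ℕ → ℝ) (hc : ∀ n : ℕ, 1 ≤ n → c n ≠ 0)
    (hgasym : ∀ n : ℕ, 1 ≤ n → (g n ~[atTop] fun x : ℝ => c n * x ^ (r n)))
    (hg'asym : ∀ n : ℕ, 1 ≤ n →
      ((fun x => deriv (g n) x) ~[atTop] fun x : ℝ => c n * r n * x ^ (r n - 1))) :
    ∀ n : ℕ, 1 ≤ n →
      (g n ~[atTop] fun x : ℝ =>
        (-1 : ℝ) ^ n * (a / (p + 1)) * (∏ j ∈ Finset.range n, (-p - 1 + (j : ℝ))) *
          x ^ (p - (n : ℝ) + 1)) := by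
  have hp1 : p + 1 < 0 := by linarith
  set K : ℕ → ℝ := fun n =>
    (-1 : ℝ) ^ n * (a / (p + 1)) * (∏ j ∈ Finset.range n, (-p - 1 + (j : ℝ))) with hKdef
  have hKne : ∀ n, K n ≠ 0 := by
    intro n
    refine mul_ne_zero (mul_ne_zero (pow_ne_zero _ (by norm_num))
      (div_ne_zero ha (by linarith))) ?_
    refine Finset.prod_ne_zero_iff.2 fun j _ => ?_
    have : (0:ℝ) ≤ (j:ℝ) := Nat.cast_nonneg j
    linarith
  have hKrec : ∀ n : ℕ, K (n + 1) = K n * (p - (n : ℝ) + 1) := by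
    intro n
    simp only [hKdef, Finset.prod_range_succ, pow_succ]
    ring
  have main : ∀ n : ℕ, 1 ≤ n → g n ~[atTop] fun x : ℝ => K n * x ^ (p - (n : ℝ) + 1) := by
    intro n hn
    induction n with
    | zero => omega
    | succ m ih =>
      by_cases hm : m = 0
      · -- base case n = 1
        subst hm
        have hg1 : g 1 = ω := by
          funext x
          rw [hgrec 0 x]
          have hgc : g 0 = fun _ => 1 := funext hg0
          simp [hgc]
        have hK1 : K 1 = a := by
          simp only [hKdef, Finset.prod_range_one, pow_one, Nat.cast_zero]
          have hne : p + 1 ≠ 0 := by linarith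
          field_simp
          ring
        have hfun : (fun x : ℝ => K 1 * x ^ (p - ((1:ℕ) : ℝ) + 1)) = fun x : ℝ => a * x ^ p := by
          funext x
          rw [hK1]
          norm_num
        rw [hg1, hfun]
        exact hωasym
      · have hm1 : 1 ≤ m := Nat.one_le_iff_ne_zero.2 hm
        have IH := ih hm1
        have h1 := (hgasym m hm1).symm.trans IH
        obtain ⟨hr, hcK⟩ := power_asym_unique (hc m hm1) (hKne m) h1
        have hKp : K m * (p - (m : ℝ) + 1) ≠ 0 := by
          refine mul_ne_zero (hKne m) ?_
          have : (1:ℝ) ≤ (m:ℝ) := by exact_mod_cast hm1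
          intro h0
          nlinarith
        have hderiv : (fun x => deriv (g m) x) ~[atTop]
            fun x : ℝ => (K m * (p - (m : ℝ) + 1)) * x ^ (p - (m : ℝ)) := by
          have h2 := hg'asym m hm1
          rw [hr, hcK] at h2
          rw [show p - (m : ℝ) + 1 - 1 = p - (m : ℝ) from by ring] at h2
          exact h2
        have hprod : (fun x : ℝ => ((m : ℝ) + 1) * ω x * g m x) ~[atTop]
            fun x : ℝ => ((m : ℝ) + 1) * (a * x ^ p) * (K m * x ^ (p - (m : ℝ) + 1)) :=
          ((IsEquivalent.refl (u := fun _ : ℝ => (m : ℝ) + 1) (l := atTop)).mul hωasym).mul IH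
        have hlo : (fun x : ℝ => ((m : ℝ) + 1) * (a * x ^ p) * (K m * x ^ (p - (m : ℝ) + 1)))
            =o[atTop] fun x : ℝ => (K m * (p - (m : ℝ) + 1)) * x ^ (p - (m : ℝ)) := by
          have base := rpow_isLittleO_rpow
            (s := p + (p - (m : ℝ) + 1)) (t := p - (m : ℝ)) (by linarith)
          have heq : (fun x : ℝ => ((m : ℝ) + 1) * (a * x ^ p) * (K m * x ^ (p - (m : ℝ) + 1)))
              =ᶠ[atTop] fun x : ℝ => (((m : ℝ) + 1) * a * K m) * x ^ (p + (p - (m : ℝ) + 1)) := by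
            filter_upwards [eventually_gt_atTop (0:ℝ)] with x hx
            rw [show ((m:ℝ)+1) * (a * x ^ p) * (K m * x ^ (p - (m:ℝ) + 1))
                = (((m:ℝ)+1) * a * K m) * (x ^ p * x ^ (p - (m:ℝ) + 1)) from by ring,
              ← Real.rpow_add hx]
          refine IsLittleO.congr' ?_ heq.symm (EventuallyEq.refl _ _)
          exact (base.const_mul_left _).const_mul_right hKp
        have hlo' : (fun x : ℝ => ((m : ℝ) + 1) * ω x * g m x) =o[atTop]
            fun x : ℝ => (K m * (p - (m : ℝ) + 1)) * x ^ (p - (m : ℝ)) :=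
          hprod.isBigO.trans_isLittleO hlo
        have hsum := hderiv.add_isLittleO hlo'
        have hgfun : g (m + 1) = fun x => deriv (g m) x + ((m : ℝ) + 1) * ω x * g m x :=
          funext (hgrec m)
        have hfun : (fun x : ℝ => K (m + 1) * x ^ (p - ((m + 1 : ℕ) : ℝ) + 1))
            = fun x : ℝ => (K m * (p - (m : ℝ) + 1)) * x ^ (p - (m : ℝ)) := by
          funext x
          push_cast
          rw [hKrec m, show p - ((m : ℝ) + 1) + 1 = p - (m : ℝ) from by ring]
        rw [hgfun, hfun]
        exact hsum
  intro n hn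
  simpa only [hKdef] using main n hn
end

section
/- Let ω be a smooth real function and define g_n by g_0(x) = 1 and g_{n+1}(x) = g_n'(x) + (n+1) ω(x) g_n(x) for n ≥ 0. Assume ω(x) ~ a x^{−1} as x → ∞ with a ≠ 0 and a ≠ j/(j+1) for every integer j ≥ 0, and assume that for each n ≥ 1 there exist c_n ≠ 0 and r_n ∈ ℝ such that g_n(x) ~ c_n x^{r_n} and g_n'(x) ~ c_n r_n x^{r_n − 1} as x → ∞. Then for each fixed n ≥ 1, g_n(x) ~ ( ∏_{j=0}^{n−1} ( a + (a−1)j ) ) · x^{−n} as x → ∞; when a ≠ 1 the coefficient equals (a−1)^n (a/(a−1))_n. -/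
open Filter Topology Asymptotics

private lemma aux_tendsto (k t : ℝ) (h : Tendsto (fun x : ℝ => k * x ^ t) atTop (𝓝 1)) :
    t = 0 ∧ k = 1 := by
  rcases lt_trichotomy t 0 with ht | ht | ht
  · exfalso
    have h0 : Tendsto (fun x : ℝ => x ^ t) atTop (𝓝 0) := by
      simpa using tendsto_rpow_neg_atTop (neg_pos.mpr ht)
    have h1 : Tendsto (fun x : ℝ => k * x ^ t) atTop (𝓝 (k * 0)) := h0.const_mul k
    have := tendsto_nhds_unique h (by simpa using h1)
    norm_num at this
  · have he : (fun x : ℝ => k * x ^ t) = fun _ => k := by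
      funext x; rw [ht, Real.rpow_zero, mul_one]
    refine ⟨ht, ?_⟩
    exact (tendsto_nhds_unique (he ▸ h) tendsto_const_nhds).symm
  · exfalso
    rcases lt_trichotomy k 0 with hk | hk | hk
    · have h1 : Tendsto (fun x : ℝ => k * x ^ t) atTop atBot :=
        (tendsto_rpow_atTop ht).const_mul_atTop_of_neg hk
      exact not_tendsto_nhds_of_tendsto_atBot h1 1 h
    · subst hk
      simp only [zero_mul] at h
      exact absurd (tendsto_nhds_unique h tendsto_const_nhds) one_ne_zero
    · have h1 : Tendsto (fun x : ℝ => k * x ^ t) atTop atTop :=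
        (tendsto_rpow_atTop ht).const_mul_atTop hk
      exact not_tendsto_nhds_of_tendsto_atTop h1 1 h

private lemma pow_equiv_unique {cc C s t : ℝ} (hC : C ≠ 0)
    (h : (fun x : ℝ => cc * x ^ s) ~[atTop] fun x : ℝ => C * x ^ t) : s = t ∧ cc = C := by
  have hne : ∀ᶠ x : ℝ in atTop, C * x ^ t ≠ 0 := by
    filter_upwards [eventually_gt_atTop 0] with x hx
    exact mul_ne_zero hC (Real.rpow_pos_of_pos hx t).ne'
  have htend := (Asymptotics.isEquivalent_iff_tendsto_one hne).mp h
  have heq : (fun x : ℝ => cc * x ^ s / (C * x ^ t)) =ᶠ[atTop]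
      fun x : ℝ => (cc / C) * x ^ (s - t) := by
    filter_upwards [eventually_gt_atTop 0] with x hx
    rw [Real.rpow_sub hx]
    have h1 : x ^ t ≠ 0 := (Real.rpow_pos_of_pos hx t).ne'
    field_simp
  have h2 : Tendsto (fun x : ℝ => (cc / C) * x ^ (s - t)) atTop (𝓝 1) := htend.congr' heq
  obtain ⟨h3, h4⟩ := aux_tendsto (cc / C) (s - t) h2
  refine ⟨by linarith [sub_eq_zero.mp h3], ?_⟩
  exact (div_eq_one_iff_eq hC).mp h4

private lemma equiv_add {u v f : ℝ → ℝ} {α β : ℝ}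
    (hu : u ~[atTop] fun x => α * f x) (hv : v ~[atTop] fun x => β * f x)
    (hαβ : α + β ≠ 0) :
    (fun x => u x + v x) ~[atTop] fun x => (α + β) * f x := by
  have h1 : (fun x => u x - α * f x) =o[atTop] f :=
    hu.isLittleO.trans_isBigO (isBigO_const_mul_self α f atTop)
  have h2 : (fun x => v x - β * f x) =o[atTop] f :=
    hv.isLittleO.trans_isBigO (isBigO_const_mul_self β f atTop)
  have h3 : (fun x => (u x + v x) - (α + β) * f x) =o[atTop] f := by
    have := h1.add h2
    refine this.congr' (by filter_upwards with x; ring) (by rfl)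
  exact h3.trans_isBigO (isBigO_self_const_mul' (IsUnit.mk0 _ hαβ) f atTop)

/-- Case `p = -1`: if `ω(x) ~ a x⁻¹` as `x → ∞` with `a ≠ 0`, `a ≠ j/(j+1)` for all
integers `j ≥ 0`, and the solutions of the recurrence `gₙ₊₁ = gₙ' + (n+1) ω gₙ`,
`g₀ = 1`, satisfy `gₙ(x) ~ cₙ x^{rₙ}` and `gₙ'(x) ~ cₙ rₙ x^{rₙ - 1}` for some
`cₙ ≠ 0`, `rₙ ∈ ℝ`, then `gₙ(x) ~ (∏_{j=0}^{n-1} (a + (a-1)j)) x⁻ⁿ` as `x → ∞` for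
every fixed `n ≥ 1`; moreover, when `a ≠ 1` the coefficient equals
`(a-1)ⁿ (a/(a-1))ₙ`. -/
theorem gn_asymptotics_p_eq_neg_one (ω : ℝ → ℝ) (hωsmooth : ContDiff ℝ (⊤ : ℕ∞) ω)
    (g : ℕ → ℝ → ℝ) (hg0 : ∀ x, g 0 x = 1)
    (hgrec : ∀ (n : ℕ) (x : ℝ), g (n + 1) x = deriv (g n) x + ((n : ℝ) + 1) * ω x * g n x)
    (a : ℝ) (ha : a ≠ 0) (ha' : ∀ j : ℕ, a ≠ (j : ℝ) / ((j : ℝ) + 1))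
    (hωasym : ω ~[atTop] fun x : ℝ => a * x ^ (-1 : ℝ))
    (c r : ℕ → ℝ) (hc : ∀ n : ℕ, 1 ≤ n → c n ≠ 0)
    (hgasym : ∀ n : ℕ, 1 ≤ n → (g n ~[atTop] fun x : ℝ => c n * x ^ (r n)))
    (hg'asym : ∀ n : ℕ, 1 ≤ n →
      ((fun x => deriv (g n) x) ~[atTop] fun x : ℝ => c n * r n * x ^ (r n - 1))) :
    (∀ n : ℕ, 1 ≤ n →
      (g n ~[atTop] fun x : ℝ =>
        (∏ j ∈ Finset.range n, (a + (a - 1) * (j : ℝ))) * x ^ (-(n : ℝ)))) ∧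
    (a ≠ 1 → ∀ n : ℕ,
      ∏ j ∈ Finset.range n, (a + (a - 1) * (j : ℝ)) =
        (a - 1) ^ n * ∏ j ∈ Finset.range n, (a / (a - 1) + (j : ℝ))) := by
  have hfac : ∀ j : ℕ, a + (a - 1) * (j : ℝ) ≠ 0 := by
    intro j hj
    apply ha' j
    rw [eq_div_iff (by positivity)]
    nlinarith [hj]
  have hprodne : ∀ n : ℕ, (∏ j ∈ Finset.range n, (a + (a - 1) * (j : ℝ))) ≠ 0 := by
    intro n
    exact Finset.prod_ne_zero_iff.mpr fun j _ => hfac j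
  constructor
  · intro n hn
    induction n, hn using Nat.le_induction with
    | base =>
      have hg0' : g 0 = fun _ => (1 : ℝ) := funext hg0
      have hg1 : g 1 = ω := by
        funext x
        rw [hgrec 0 x, hg0', deriv_const]
        norm_num
      rw [hg1]
      have : (fun x : ℝ => (∏ j ∈ Finset.range 1, (a + (a - 1) * (j : ℝ))) * x ^ (-(1:ℕ) : ℝ))
          = fun x : ℝ => a * x ^ (-1 : ℝ) := by
        funext x; norm_num
      rw [this]
      exact hωasym
    | succ n hn ih =>
      set Cn := ∏ j ∈ Finset.range n, (a + (a - 1) * (j : ℝ)) with hCn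
      have hCne : Cn ≠ 0 := hprodne n
      have hcr : r n = -(n : ℝ) ∧ c n = Cn := pow_equiv_unique hCne ((hgasym n hn).symm.trans ih)
      obtain ⟨hr, hcc⟩ := hcr
      -- derivative asymptotics
      have hderiv : (fun x => deriv (g n) x) ~[atTop]
          fun x : ℝ => (-(n : ℝ) * Cn) * x ^ (-((n : ℝ) + 1)) := by
        have h0 := hg'asym n hn
        rw [hr, hcc] at h0
        have he : (fun x : ℝ => Cn * -(n : ℝ) * x ^ (-(n : ℝ) - 1))
            = fun x : ℝ => (-(n : ℝ) * Cn) * x ^ (-((n : ℝ) + 1)) := by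
          funext x
          rw [show (-(n : ℝ) - 1) = -((n : ℝ) + 1) by ring]
          ring
        exact he ▸ h0
      -- product term asymptotics
      have hmul : (fun x => ((n : ℝ) + 1) * ω x * g n x) ~[atTop]
          fun x : ℝ => (((n : ℝ) + 1) * a * Cn) * x ^ (-((n : ℝ) + 1)) := by
        have h1 : (fun x => ((n : ℝ) + 1) * ω x * g n x) ~[atTop]
            fun x : ℝ => ((n : ℝ) + 1) * (a * x ^ (-1 : ℝ)) * (Cn * x ^ (-(n : ℝ))) :=
          ((IsEquivalent.refl (u := fun _ : ℝ => (n : ℝ) + 1)).mul hωasym).mul ih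
        refine h1.trans (IsEquivalent.congr_left (IsEquivalent.refl) ?_)
        filter_upwards [eventually_gt_atTop (0:ℝ)] with x hx
        rw [show (-((n : ℝ) + 1)) = (-1) + (-(n : ℝ)) by ring, Real.rpow_add hx]
        ring
      -- sum
      have hsum := equiv_add hderiv hmul (by
        rw [show (-(n : ℝ) * Cn + ((n : ℝ) + 1) * a * Cn) = (a + (a - 1) * (n : ℝ)) * Cn by ring]
        exact mul_ne_zero (hfac n) hCne)
      have hgn1 : g (n + 1) = fun x => deriv (g n) x + ((n : ℝ) + 1) * ω x * g n x :=
        funext fun x => hgrec n x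
      rw [hgn1]
      refine hsum.trans (IsEquivalent.congr_left (IsEquivalent.refl) ?_)
      filter_upwards with x
      rw [Finset.prod_range_succ, ← hCn]
      push_cast
      ring
  · intro ha1 n
    have h2 : a - 1 ≠ 0 := sub_ne_zero.mpr ha1
    calc ∏ j ∈ Finset.range n, (a + (a - 1) * (j : ℝ))
        = ∏ j ∈ Finset.range n, ((a - 1) * (a / (a - 1) + (j : ℝ))) := by
          refine Finset.prod_congr rfl fun j _ => ?_
          field_simp
      _ = (a - 1) ^ n * ∏ j ∈ Finset.range n, (a / (a - 1) + (j : ℝ)) := by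
          rw [Finset.prod_mul_distrib, Finset.prod_const, Finset.card_range]
end

section
/- For f(x) = x² + 1 and every integer n ≥ 0, the nested derivative at 0 satisfies 𝔇^{2n}[f](0) = (2/(n+1)) · 4^n · (4^{n+1} − 1) · |B_{2(n+1)}|, where B_m denotes the m-th Bernoulli number. -/
/-!
Write `𝔇ⁿ[f] = Pₙ(x)` with `P₀ = 1`, `Pₙ₊₁ = (f Pₙ)'`. By the chain rule, any `y` with
`y' = f(y)` satisfies `y⁽ⁿ⁺¹⁾ = (f Pₙ)(y)`. For `f = x² + 1` take `y = tan`, so that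
`𝔇ⁿ[f](0) = tan⁽ⁿ⁺¹⁾(0)`. We run this argument on formal power series over `ℂ`, with
`tan t = -i (e²ⁱᵗ - 1) / (e²ⁱᵗ + 1)`, where `t tan t = t cot t - 2t cot 2t` expresses the Taylor
coefficients of `tan` through the Bernoulli generating function `x / (eˣ - 1)`. The absolute value
comes for free: `Pₙ` has nonnegative coefficients, so `𝔇ⁿ[f](0) ≥ 0`.
-/

open Filter Topology

namespace Polynomial

variable {R : Type*} [CommSemiring R]

noncomputable def nestedDerivative (p : R[X]) : ℕ → R[X]
  | 0 => 1
  | n + 1 => derivative (p * nestedDerivative p n)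

theorem coeff_nestedDerivative_nonneg [PartialOrder R] [IsOrderedRing R] {p : R[X]}
    (hp : ∀ k, 0 ≤ p.coeff k) (n k : ℕ) : 0 ≤ (p.nestedDerivative n).coeff k := by
  induction n generalizing k with
  | zero => simp only [nestedDerivative, coeff_one]; split_ifs <;> simp
  | succ n ih =>
    rw [nestedDerivative, coeff_derivative, coeff_mul]
    exact mul_nonneg (Finset.sum_nonneg fun ij _ => mul_nonneg (hp _) (ih _))
      (add_nonneg (Nat.cast_nonneg _) zero_le_one)

theorem nestedDeriv_aeval [Algebra R ℝ] (p : R[X]) (n : ℕ) (x : ℝ) :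
    nestedDeriv (fun x => aeval x p) n x = aeval x (p.nestedDerivative n) := by
  induction n generalizing x with
  | zero => simp [nestedDeriv, nestedDerivative]
  | succ n ih => simp only [nestedDeriv, nestedDerivative, ih, ← map_mul, Polynomial.deriv_aeval]

end Polynomial

open Polynomial in
theorem Derivation.iterate_apply_eq_aeval_mul_nestedDerivative {R A : Type*} [CommSemiring R]
    [CommSemiring A] [Algebra R A] (D : Derivation R A A) {p : R[X]} {y : A}
    (hy : D y = aeval y p) (n : ℕ) : (⇑D)^[n] (D y) = aeval y (p * p.nestedDerivative n) := by
  induction n with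
  | zero => simp [nestedDerivative, hy]
  | succ n ih =>
    rw [Function.iterate_succ_apply', ih, map_aeval, hy, smul_eq_mul, nestedDerivative,
      ← map_mul, mul_comm]

namespace PowerSeries

theorem derivative_rescale {R : Type*} [CommSemiring R] (f : R⟦X⟧) (a : R) :
    d⁄dX R (rescale a f) = C a * rescale a (d⁄dX R f) := by
  ext n
  simp only [coeff_derivative, coeff_rescale, coeff_C_mul, pow_succ]
  ring

theorem constantCoeff_aeval {R A : Type*} [CommSemiring R] [CommSemiring A] [Algebra R A]
    (f : A⟦X⟧) (p : Polynomial R) :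
    constantCoeff (Polynomial.aeval f p) = Polynomial.aeval (constantCoeff f) p := by
  induction p using Polynomial.induction_on with
  | C a => simp [algebraMap_apply]
  | add p q hp hq => simp [hp, hq]
  | monomial n a h => simp_all [pow_succ, algebraMap_apply]

variable {A : Type*} [CommRing A] [Algebra ℚ A]

theorem constantCoeff_rescale_exp (a : A) : constantCoeff (rescale a (exp A)) = 1 := by
  simp [← coeff_zero_eq_constantCoeff_apply, coeff_rescale]

theorem rescale_exp_sub_one_ne_zero {a : A} (ha : a ≠ 0) : rescale a (exp A) - 1 ≠ 0 := by
  intro h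
  have h₁ := congrArg (coeff 1) h
  simp only [map_sub, coeff_rescale, coeff_exp, coeff_one, map_zero] at h₁
  simp_all

theorem rescale_bernoulliPowerSeries_mul (a : A) :
    rescale a (bernoulliPowerSeries A) * (rescale a (exp A) - 1) = C a * X := by
  rw [← rescale_X, ← map_one (rescale a), ← map_sub, ← map_mul,
    bernoulliPowerSeries_mul_exp_sub_one]

end PowerSeries

section TangentSeries

open PowerSeries Complex
open scoped Nat

local notation "E₂" => rescale (2 * I) (exp ℂ)

noncomputable def tanSeries : ℂ⟦X⟧ :=
  -C I * (E₂ - 1) * (E₂ + 1)⁻¹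

theorem C_I_mul_C_I : C I * C I = (-1 : ℂ⟦X⟧) := by
  rw [← map_mul, I_mul_I, map_neg, map_one]

theorem constantCoeff_rescale_exp_add_one_ne_zero (a : ℂ) :
    constantCoeff (rescale a (exp ℂ) + 1) ≠ 0 := by
  rw [map_add, constantCoeff_rescale_exp, map_one]
  norm_num

theorem C_I_mul_tanSeries_mul : C I * tanSeries * (E₂ + 1) = E₂ - 1 := by
  have h := PowerSeries.inv_mul_cancel _ (constantCoeff_rescale_exp_add_one_ne_zero (2 * I))
  rw [tanSeries]
  linear_combination (-C I * C I * (E₂ - 1)) * h - (E₂ - 1) * C_I_mul_C_I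

theorem constantCoeff_tanSeries : constantCoeff tanSeries = 0 := by
  simp [tanSeries, constantCoeff_rescale_exp]

theorem derivative_tanSeries : d⁄dX ℂ tanSeries = 1 + tanSeries ^ 2 := by
  have hE : d⁄dX ℂ E₂ = 2 * C I * E₂ := by
    rw [derivative_rescale, derivative_exp, map_mul, map_ofNat]
  have hT := C_I_mul_tanSeries_mul
  have hT' := congrArg (d⁄dX ℂ) hT
  simp only [Derivation.leibniz, derivative_C, map_add, map_sub, derivative_one, hE,
    smul_eq_mul] at hT'
  have hE₁ : E₂ + 1 ≠ 0 := fun h =>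
    constantCoeff_rescale_exp_add_one_ne_zero (2 * I) (by rw [h, map_zero])
  refine mul_right_cancel₀ (pow_ne_zero 2 hE₁) ?_
  linear_combination (-C I * (E₂ + 1)) * hT' + (C I * tanSeries * (E₂ + 1) - E₂ - 1) * hT
    + ((d⁄dX ℂ tanSeries - tanSeries ^ 2) * (E₂ + 1) ^ 2 - 2 * E₂ * (E₂ + 1)
      + 2 * E₂ * C I * tanSeries * (E₂ + 1)) * C_I_mul_C_I

/-- `t tan t = t cot t - 2t cot 2t`, where `t cot t = it + B(2it)` for `B(x) = x / (eˣ - 1)`. -/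
theorem X_mul_tanSeries :
    X * tanSeries = rescale (2 * I) (bernoulliPowerSeries ℂ)
      - rescale (4 * I) (bernoulliPowerSeries ℂ) - C I * X := by
  have hE : rescale (4 * I) (exp ℂ) = E₂ * E₂ := by
    rw [exp_mul_exp_eq_exp_add]; ring_nf
  have h₂ := rescale_bernoulliPowerSeries_mul (2 * I)
  have h₄ := rescale_bernoulliPowerSeries_mul (4 * I)
  rw [map_mul, map_ofNat] at h₂ h₄
  refine mul_right_cancel₀ (rescale_exp_sub_one_ne_zero (by simp : (4 * I) ≠ 0)) ?_
  linear_combination h₄ + (X * tanSeries + C I * X - rescale (2 * I) (bernoulliPowerSeries ℂ)) * hE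
    - (E₂ + 1) * h₂ - C I * X * (E₂ - 1) * C_I_mul_tanSeries_mul
    + X * tanSeries * (E₂ ^ 2 - 1) * C_I_mul_C_I

theorem coeff_succ_tanSeries (m : ℕ) :
    coeff (m + 1) tanSeries
      = ((2 * I) ^ (m + 2) - (4 * I) ^ (m + 2)) * bernoulli (m + 2) / (m + 2)! := by
  have h := congrArg (coeff (m + 2)) X_mul_tanSeries
  rw [coeff_succ_X_mul] at h
  simp only [bernoulliPowerSeries, map_div₀, eq_ratCast, map_natCast, map_sub, coeff_rescale,
    coeff_mk, coeff_succ_mul_X, coeff_succ_C, sub_zero] at h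
  rw [h]
  ring

theorem eval_zero_nestedDerivative_X_sq_add_one (n : ℕ) :
    ((((Polynomial.X ^ 2 + 1 : Polynomial ℚ).nestedDerivative n).eval 0 : ℚ) : ℂ)
      = (n + 1)! * coeff (n + 1) tanSeries := by
  have hD : (d⁄dX ℂ).restrictScalars ℚ tanSeries
      = Polynomial.aeval tanSeries (Polynomial.X ^ 2 + 1 : Polynomial ℚ) := by
    simp [Derivation.restrictScalars_apply, derivative_tanSeries, add_comm]
  have h := congrArg constantCoeff (Derivation.iterate_apply_eq_aeval_mul_nestedDerivative _ hD n)
  change constantCoeff ((d⁄dX ℂ)^[n] (d⁄dX ℂ tanSeries)) = _ at h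
  rw [constantCoeff_iterate_derivative, coeff_derivative, constantCoeff_aeval,
    constantCoeff_tanSeries, ← Polynomial.coeff_zero_eq_aeval_zero',
    Polynomial.coeff_zero_eq_eval_zero] at h
  simp only [Polynomial.eval_mul, Polynomial.eval_add, Polynomial.eval_pow, Polynomial.eval_X,
    Polynomial.eval_one, eq_ratCast] at h
  push_cast at h
  rw [Nat.factorial_succ]
  push_cast
  linear_combination -h

theorem eval_zero_nestedDerivative_X_sq_add_one_two_mul (n : ℕ) :
    ((Polynomial.X ^ 2 + 1 : Polynomial ℚ).nestedDerivative (2 * n)).eval 0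
      = (-1) ^ n * (2 / (n + 1) * 4 ^ n * (4 ^ (n + 1) - 1) * bernoulli (2 * (n + 1))) := by
  have h := eval_zero_nestedDerivative_X_sq_add_one (2 * n)
  have hI : ∀ a : ℂ, (a * I) ^ (2 * n + 2) = (-1) ^ (n + 1) * (a ^ 2) ^ (n + 1) := fun a => by
    rw [show 2 * n + 2 = 2 * (n + 1) by ring, pow_mul, mul_pow, I_sq, mul_pow, mul_comm]
  have hfac : ((2 * n + 2)! : ℂ) = (2 * (n + 1)) * (2 * n + 1)! := by
    rw [Nat.factorial_succ]; push_cast; ring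
  rw [coeff_succ_tanSeries, hI, hI, hfac, show (2 : ℂ) ^ 2 = 4 by norm_num,
    show ((4 : ℂ) ^ 2) ^ (n + 1) = (4 ^ (n + 1)) ^ 2 by rw [← pow_mul, ← pow_mul, mul_comm],
    show 2 * n + 2 = 2 * (n + 1) by ring] at h
  have hn : ((n : ℂ) + 1) ≠ 0 := Nat.cast_add_one_ne_zero n
  have hf : ((2 * n + 1)! : ℂ) ≠ 0 := Nat.cast_ne_zero.2 (Nat.factorial_ne_zero _)
  apply Rat.cast_injective (α := ℂ)
  rw [h]
  push_cast
  field_simp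
  ring

end TangentSeries

/-- For `f(x) = x² + 1` and every `n ≥ 0`,
`𝔇²ⁿ[f](0) = (2/(n+1)) · 4ⁿ · (4ⁿ⁺¹ - 1) · |B₂₍ₙ₊₁₎|`,
where `Bₘ` is the `m`-th Bernoulli number. -/
theorem nested_deriv_tan_bernoulli :
    ∀ n : ℕ, nestedDeriv (fun x : ℝ => x ^ 2 + 1) (2 * n) 0 =
      2 / ((n : ℝ) + 1) * 4 ^ n * (4 ^ (n + 1) - 1) *
        |((bernoulli (2 * (n + 1)) : ℚ) : ℝ)| := by
  intro n
  have hf : (fun x : ℝ => x ^ 2 + 1)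
      = fun x => Polynomial.aeval x (Polynomial.X ^ 2 + 1 : Polynomial ℚ) := by
    funext x; simp
  have hcoeff : ∀ k, 0 ≤ (Polynomial.X ^ 2 + 1 : Polynomial ℚ).coeff k := fun k => by
    simp only [Polynomial.coeff_add, Polynomial.coeff_X_pow, Polynomial.coeff_one]
    split_ifs <;> norm_num
  have hnonneg := Polynomial.coeff_nestedDerivative_nonneg hcoeff (2 * n) 0
  have h4 : (1 : ℝ) ≤ 4 ^ (n + 1) := one_le_pow₀ (by norm_num)
  rw [hf, Polynomial.nestedDeriv_aeval, ← Polynomial.coeff_zero_eq_aeval_zero', eq_ratCast,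
    ← abs_of_nonneg hnonneg, Polynomial.coeff_zero_eq_eval_zero,
    eval_zero_nestedDerivative_X_sq_add_one_two_mul]
  push_cast
  rw [abs_mul, abs_pow, abs_neg, abs_one, one_pow, one_mul, abs_mul,
    abs_of_nonneg (by have := sub_nonneg.2 h4; positivity)]
end

section
/- For every real x and every real n > 0, the equation n = 2s·(arctan(s) − arctan(x)) in the unknown s has exactly two real solutions s₋ and s₊, which satisfy s₋ < min(x, 0) and s₊ > max(x, 0). -/
/-!
Let `g x s = 2s(arctan s - arctan x)` (`saddleFn`). Oddness of `arctan` gives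
`g (-x) (-s) = g x s`, so the solutions with `s ≤ 0` are the negatives of the solutions with
`s ≥ 0` for `-x`, and it suffices to treat `s ≥ 0`. There `g x ≤ 0` on `[0, max x 0]`, while on
`[max x 0, ∞)` it is a product of a positive and a nonnegative increasing factor, hence strictly
increasing from `0` to `+∞`, and takes the value `n > 0` exactly once.
-/

open Real Filter Set Topology

noncomputable def saddleFn (x s : ℝ) : ℝ := 2 * s * (arctan s - arctan x)

lemma saddleFn_neg_neg (x s : ℝ) : saddleFn (-x) (-s) = saddleFn x s := by
  simp only [saddleFn, arctan_neg]
  ring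

lemma continuous_saddleFn (x : ℝ) : Continuous (saddleFn x) := by
  unfold saddleFn
  fun_prop

lemma saddleFn_nonpos {x s : ℝ} (hs : s ∈ Icc 0 (max x 0)) : saddleFn x s ≤ 0 := by
  rcases le_max_iff.1 hs.2 with hsx | hs0
  · exact mul_nonpos_of_nonneg_of_nonpos (by linarith [hs.1])
      (sub_nonpos.2 (arctan_strictMono.monotone hsx))
  · simp [saddleFn, le_antisymm hs0 hs.1]

lemma strictMonoOn_saddleFn (x : ℝ) : StrictMonoOn (saddleFn x) (Ici (max x 0)) := by
  intro t ht s hs hts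
  have ht0 : 0 ≤ t := (le_max_right x 0).trans ht
  have hxt : x ≤ t := (le_max_left x 0).trans ht
  exact mul_lt_mul' (by linarith) (sub_lt_sub_right (arctan_strictMono hts) _)
    (sub_nonneg.2 (arctan_strictMono.monotone hxt)) (by linarith)

lemma tendsto_saddleFn_atTop (x : ℝ) : Tendsto (saddleFn x) atTop atTop := by
  have hlin : Tendsto (fun s : ℝ => 2 * s) atTop atTop :=
    tendsto_id.const_mul_atTop two_pos
  have hgap : Tendsto (fun s => arctan s - arctan x) atTop (𝓝 (π / 2 - arctan x)) :=
    (tendsto_arctan_atTop.mono_right nhdsWithin_le_nhds).sub_const _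
  exact hlin.atTop_mul_pos (sub_pos.2 (arctan_lt_pi_div_two x)) hgap

lemma exists_saddleFn_eq_iff_of_nonneg (x : ℝ) {n : ℝ} (hn : 0 < n) :
    ∃ sp, max x 0 < sp ∧ ∀ s, 0 ≤ s → (saddleFn x s = n ↔ s = sp) := by
  have hzero : saddleFn x (max x 0) = 0 :=
    le_antisymm (saddleFn_nonpos ⟨le_max_right x 0, le_rfl⟩)
      (mul_nonneg (by positivity) (sub_nonneg.2 (arctan_strictMono.monotone (le_max_left x 0))))
  obtain ⟨sp, hsp, hgsp⟩ := intermediate_value_Ioi (continuous_saddleFn x).continuousOn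
    (tendsto_saddleFn_atTop x) (show n ∈ Ioi (saddleFn x (max x 0)) by rw [hzero]; exact hn)
  refine ⟨sp, hsp, fun s hs => ⟨fun hgs => ?_, fun h => h ▸ hgsp⟩⟩
  rcases le_total s (max x 0) with hle | hge
  · linarith [saddleFn_nonpos ⟨hs, hle⟩]
  · exact (strictMonoOn_saddleFn x).injOn hge (mem_Ici.2 hsp.le) (hgs.trans hgsp.symm)

/-- For every real `x` and every `n > 0`, the equation `n = 2s(arctan s - arctan x)`
has exactly two real solutions `s₋` and `s₊`, with `s₋ < min x 0` and `s₊ > max x 0`. -/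
theorem saddle_point_equation_two_solutions (x n : ℝ) (hn : 0 < n) :
    ∃ sm sp : ℝ, sm < min x 0 ∧ max x 0 < sp ∧
      ∀ s : ℝ, n = 2 * s * (arctan s - arctan x) ↔ (s = sm ∨ s = sp) := by
  obtain ⟨sp, hsp, hpos⟩ := exists_saddleFn_eq_iff_of_nonneg x hn
  obtain ⟨sm, hsm, hneg⟩ := exists_saddleFn_eq_iff_of_nonneg (-x) hn
  have hmin : min x 0 = -max (-x) 0 := by rw [← neg_zero, max_neg_neg, neg_neg, neg_zero]
  refine ⟨-sm, sp, by linarith, hsp, fun s => ?_⟩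
  rw [eq_comm, ← saddleFn]
  rcases le_total 0 s with hs | hs
  · rw [hpos s hs, or_iff_right fun h => by linarith [le_max_right (-x) 0]]
  · rw [← saddleFn_neg_neg, hneg (-s) (neg_nonneg.2 hs), neg_eq_iff_eq_neg,
      or_iff_left fun h => by linarith [le_max_right x 0]]
end

section
/- Fix a real n > 0 and for each x > 0 let s₊(x) denote the unique solution s > x of n = 2s·(arctan(s) − arctan(x)). Then s₊(x) = (1 + n/2)·x + O(1/x) as x → ∞; that is, x·(s₊(x) − (1 + n/2)x) remains bounded as x → ∞. -/
open Real Filter Asymptotics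

/-!
Inversion turns `arctan S - arctan x` into `arctan x⁻¹ - arctan S⁻¹`, an increment of `arctan`
near `0`, where its slope lies between `1 / (1 + x⁻²)` and `1`. Hence `n / (2 S)` is squeezed
between `(x⁻¹ - S⁻¹) / (1 + x⁻²)` and `x⁻¹ - S⁻¹`, which places `S - (1 + n/2) x` in
`[0, n / (2 x)]`.
-/

theorem arctan_sub_arctan_le_sub {a b : ℝ} (hba : b ≤ a) : arctan a - arctan b ≤ a - b := by
  simpa using image_sub_le_mul_sub_of_deriv_le differentiable_arctan (C := 1)
    (fun t => by
      rw [Real.deriv_arctan]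
      exact div_le_one_of_le₀ (by nlinarith) (by positivity)) hba

theorem sub_div_one_add_sq_le_arctan_sub_arctan {a b : ℝ} (hb : 0 ≤ b) (hba : b ≤ a) :
    (a - b) / (1 + a ^ 2) ≤ arctan a - arctan b := by
  rw [div_eq_inv_mul, ← one_div]
  refine (convex_Icc b a).mul_sub_le_image_sub_of_le_deriv continuous_arctan.continuousOn
    differentiable_arctan.differentiableOn (fun t ht => ?_) b (by simp [hba]) a (by simp [hba]) hba
  rw [interior_Icc] at ht
  simp only [Real.deriv_arctan]
  gcongr
  exacts [hb.trans ht.1.le, ht.2.le]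

theorem arctan_sub_arctan_eq_arctan_inv_sub_arctan_inv {x y : ℝ} (hx : 0 < x) (hy : 0 < y) :
    arctan y - arctan x = arctan x⁻¹ - arctan y⁻¹ := by
  rw [arctan_inv_of_pos hx, arctan_inv_of_pos hy]; ring

theorem sub_one_add_half_mul_mem_Icc_of_eq_mul_arctan_sub {n x S : ℝ} (hx : 0 < x)
    (hxS : x < S) (hn : n = 2 * S * (arctan S - arctan x)) :
    S - (1 + n / 2) * x ∈ Set.Icc 0 (n / 2 * x⁻¹) := by
  have hS : 0 < S := hx.trans hxS
  have hinv : S⁻¹ ≤ x⁻¹ := (inv_strictAnti₀ hx hxS).le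
  rw [arctan_sub_arctan_eq_arctan_inv_sub_arctan_inv hx hS] at hn
  have hupper := mul_le_mul_of_nonneg_left (arctan_sub_arctan_le_sub hinv)
    (by positivity : 0 ≤ 2 * S)
  have hlower := mul_le_mul_of_nonneg_left
    (sub_div_one_add_sq_le_arctan_sub_arctan (inv_nonneg.2 hS.le) hinv)
    (by positivity : 0 ≤ 2 * S)
  rw [← hn] at hupper hlower
  field_simp at hupper hlower
  constructor
  · linarith
  · rw [← div_eq_mul_inv, le_div_iff₀ hx]
    nlinarith

theorem saddle_point_positive_branch_asymptotics_general (n : ℝ)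
    (s : ℝ → ℝ)
    (hs : ∀ x : ℝ, 0 < x →
      x < s x ∧ n = 2 * s x * (arctan (s x) - arctan x)) :
    (fun x : ℝ => s x - (1 + n / 2) * x) =O[atTop] fun x : ℝ => x⁻¹ := by
  refine isBigO_iff.2 ⟨n / 2, ?_⟩
  filter_upwards [eventually_gt_atTop 0] with x hx
  obtain ⟨hxs, hn⟩ := hs x hx
  obtain ⟨hnonneg, hle⟩ := sub_one_add_half_mul_mem_Icc_of_eq_mul_arctan_sub hx hxs hn
  rwa [norm_of_nonneg hnonneg, norm_of_nonneg (inv_nonneg.2 hx.le)]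

/-- Fix `n > 0` and for each `x > 0` let `s x > x` solve `n = 2s(arctan s - arctan x)`.
Then `s x = (1 + n/2) x + O(1/x)` as `x → ∞`, i.e. `x (s x - (1 + n/2) x)` stays
bounded as `x → ∞`. -/
theorem saddle_point_positive_branch_asymptotics (n : ℝ) (hn : 0 < n)
    (s : ℝ → ℝ)
    (hs : ∀ x : ℝ, 0 < x →
      x < s x ∧ n = 2 * s x * (arctan (s x) - arctan x)) :
    (fun x : ℝ => s x - (1 + n / 2) * x) =O[atTop] fun x : ℝ => x⁻¹ :=
  saddle_point_positive_branch_asymptotics_general n s hs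
end

section
/- For each real n > 0, let s₊(n) be the unique positive solution of n = 2s·arctan(s). Then s₊(n)/n → 1/π as n → ∞. -/
open Real Filter Topology

/-- For `n > 0`, let `s n` be the unique positive solution of `n = 2s·arctan s`.
Then `s n / n → 1/π` as `n → ∞`. -/
theorem saddle_point_at_zero_asymptotics (s : ℝ → ℝ)
    (hs : ∀ n : ℝ, 0 < n → 0 < s n ∧ n = 2 * s n * arctan (s n)) :
    Tendsto (fun n : ℝ => s n / n) atTop (𝓝 (1 / π)) := by
  have hlow : ∀ n : ℝ, 0 < n → n / π ≤ s n := by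
    intro n hn
    obtain ⟨hpos, heq⟩ := hs n hn
    have h1 : arctan (s n) < π / 2 := arctan_lt_pi_div_two _
    rw [div_le_iff₀ pi_pos]
    nlinarith
  have hstop : Tendsto s atTop atTop := by
    refine tendsto_atTop_mono' _ ?_ (tendsto_id.atTop_div_const pi_pos)
    filter_upwards [eventually_gt_atTop 0] with n hn using hlow n hn
  have harc : Tendsto (fun n => arctan (s n)) atTop (𝓝 (π / 2)) :=
    (tendsto_arctan_atTop.mono_right nhdsWithin_le_nhds).comp hstop
  have hmain : Tendsto (fun n => 1 / (2 * arctan (s n))) atTop (𝓝 (1 / (2 * (π / 2)))) := by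
    refine tendsto_const_nhds.div (harc.const_mul 2) ?_
    have := pi_pos; positivity
  have hpi : 1 / (2 * (π / 2)) = 1 / π := by ring
  rw [hpi] at hmain
  refine hmain.congr' ?_
  filter_upwards [eventually_gt_atTop 0] with n hn
  obtain ⟨hpos, heq⟩ := hs n hn
  have ha : 0 < arctan (s n) := by rw [← Real.arctan_zero]; exact Real.arctan_strictMono hpos
  field_simp
  linarith [heq]
end

section
/- Let f be a smooth real function, nonvanishing on an open interval, with f' nonvanishing, and let h satisfy h' = 1/f. Define n(t, s) = f'(s)·( h(s) − h(t+s) ). Then the Jacobian J(t, s) = ∂n/∂s − ∂n/∂t satisfies the identity J(t, s) = n(t, s)·f''(s)/f'(s) + f'(s)/f(s), for all (t, s) in the domain. -/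
open Filter Topology

/-- For smooth `f` with `f ≠ 0` and `f' ≠ 0` on an open interval `I`, `h' = 1/f` on `I`,
and rays `n(t,s) = f'(s)(h(s) - h(t+s))`, the Jacobian `J = ∂n/∂s - ∂n/∂t` satisfies
`J(t,s) = n(t,s) f''(s)/f'(s) + f'(s)/f(s)`. -/
theorem ray_jacobian_identity (f h : ℝ → ℝ) (hf : ContDiff ℝ (⊤ : ℕ∞) f)
    (I : Set ℝ) (hIopen : IsOpen I) (hIinterval : Convex ℝ I)
    (hfne : ∀ x ∈ I, f x ≠ 0) (hf'ne : ∀ x ∈ I, deriv f x ≠ 0)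
    (hh : ∀ x ∈ I, HasDerivAt h (1 / f x) x)
    (N : ℝ → ℝ → ℝ) (hN : ∀ t s, N t s = deriv f s * (h s - h (t + s)))
    (J : ℝ → ℝ → ℝ)
    (hJ : ∀ t s, J t s = deriv (fun σ => N t σ) s - deriv (fun τ => N τ s) t) :
    ∀ t s : ℝ, s ∈ I → t + s ∈ I →
      J t s = N t s * deriv (deriv f) s / deriv f s + deriv f s / f s := by
  intro t s hs hts
  have hf' : ContDiff ℝ (↑(⊤:ℕ∞)) (deriv f) := by have := (hf.of_le (by simp) : ContDiff ℝ (↑(⊤:ℕ∞)) f).iterate_deriv 1; simpa using this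
  have hds : HasDerivAt h (1 / f s) s := hh s hs
  have hdts : HasDerivAt h (1 / f (t + s)) (t + s) := hh (t + s) hts
  -- derivative of σ ↦ h (t + σ) at s
  have hcomp_s : HasDerivAt (fun σ => h (t + σ)) (1 / f (t + s)) s := by
    have := hdts.comp s ((hasDerivAt_id s).const_add t)
    simpa [Function.comp_def] using this
  -- derivative of τ ↦ h (τ + s) at t
  have hcomp_t : HasDerivAt (fun τ => h (τ + s)) (1 / f (t + s)) t := by
    have := hdts.comp t ((hasDerivAt_id t).add_const s)
    simpa [Function.comp_def] using this
  have hf'd : HasDerivAt (deriv f) (deriv (deriv f) s) s :=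
    ((hf'.differentiable (by simp)) s).hasDerivAt
  -- ∂N/∂s
  have hNs : HasDerivAt (fun σ => N t σ)
      (deriv (deriv f) s * (h s - h (t + s)) +
        deriv f s * (1 / f s - 1 / f (t + s))) s := by
    have : HasDerivAt (fun σ => deriv f σ * (h σ - h (t + σ)))
        (deriv (deriv f) s * (h s - h (t + s)) +
          deriv f s * (1 / f s - 1 / f (t + s))) s :=
      hf'd.mul (hds.sub hcomp_s)
    exact this.congr_of_eventuallyEq (Filter.Eventually.of_forall fun σ => (hN t σ))
  -- ∂N/∂t
  have hNt : HasDerivAt (fun τ => N τ s) (deriv f s * (0 - 1 / f (t + s))) t := by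
    have : HasDerivAt (fun τ => deriv f s * (h s - h (τ + s)))
        (deriv f s * (0 - 1 / f (t + s))) t :=
      (((hasDerivAt_const t (h s)).sub hcomp_t).const_mul (deriv f s))
    exact this.congr_of_eventuallyEq (Filter.Eventually.of_forall fun τ => (hN τ s))
  rw [hJ, hNs.deriv, hNt.deriv, hN]
  have h1 : f s ≠ 0 := hfne s hs
  have h2 : deriv f s ≠ 0 := hf'ne s hs
  field_simp
  ring
end
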